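/- arXiv:1610.03476 — 7 statements merged into one kernel-verified Lean document; each statement's English description precedes it below -/
import Mathlib

section
/- Let $m \le n$ be positive integers and let $a_1, a_2, \dots, a_n$ be a sequence of non-negative integers with $\sum_{i=1}^n a_i = n$. Then $\sum_{j=1}^{n-m+1} a_j a_{j+1} \cdots a_{j+m-1} \le (n/m)^m$. -/
/-!
Every window `[j, j + m)` meets each residue class mod `m` exactly once, so its product is one of
the monomials in the expansion of `∏_r S_r`, where `S_r` is the sum of the `a_i` with `i ≡ r`;
distinct windows give distinct monomials, and all monomials are non-negative. Hence the sum of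
the window products is at most `∏_r S_r ≤ ((∑_r S_r) / m) ^ m = (n / m) ^ m` by AM-GM.
-/

open Finset

theorem Real.prod_le_sum_div_card_pow {ι : Type*} (s : Finset ι) {z : ι → ℝ}
    (hz : ∀ i ∈ s, 0 ≤ z i) : ∏ i ∈ s, z i ≤ ((∑ i ∈ s, z i) / #s) ^ #s := by
  rcases s.eq_empty_or_nonempty with rfl | hs
  · simp
  have hcard : (0 : ℝ) < #s := by exact_mod_cast hs.card_pos
  have hamgm := Real.geom_mean_le_arith_mean s (fun _ ↦ 1) z (fun _ _ ↦ zero_le_one)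
    (by simpa using hcard) hz
  simp only [Real.rpow_one, one_mul, sum_const, nsmul_eq_mul, mul_one] at hamgm
  calc ∏ i ∈ s, z i = ((∏ i ∈ s, z i) ^ ((#s : ℝ)⁻¹)) ^ #s :=
        (Real.rpow_inv_natCast_pow (prod_nonneg hz) hs.card_pos.ne').symm
    _ ≤ ((∑ i ∈ s, z i) / #s) ^ #s :=
        pow_le_pow_left₀ (Real.rpow_nonneg (prod_nonneg hz) _) hamgm _

theorem Nat.exists_mem_Ico_mod_eq (j : ℕ) {m r : ℕ} (hr : r < m) :
    ∃ i ∈ Ico j (j + m), i % m = r := by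
  have : r ∈ (Ico j (j + m)).image (· % m) := by
    rw [Nat.image_Ico_mod]
    exact mem_range.2 hr
  simpa only [mem_image] using this

theorem sum_prod_Ico_le_prod_sum_mod {R : Type*} [CommSemiring R] [PartialOrder R]
    [IsOrderedRing R] {m : ℕ} (hm : 0 < m) {J s : Finset ℕ} (hJ : ∀ j ∈ J, Ico j (j + m) ⊆ s)
    {f : ℕ → R} (hf : ∀ i ∈ s, 0 ≤ f i) :
    ∑ j ∈ J, ∏ i ∈ Ico j (j + m), f i ≤ ∏ r ∈ range m, ∑ i ∈ s with i % m = r, f i := by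
  choose x hx_mem hx_mod using fun j (r : Fin m) ↦ Nat.exists_mem_Ico_mod_eq j r.isLt
  have hx_eq {j i} (hi : i ∈ Ico j (j + m)) : x j ⟨i % m, Nat.mod_lt i hm⟩ = i :=
    Nat.mod_injOn_Ico j m (hx_mem _ _) hi (hx_mod _ _)
  have hx_window (j : ℕ) : ∏ i ∈ Ico j (j + m), f i = ∏ r, f (x j r) :=
    (prod_nbij' (x j) (fun i ↦ ⟨i % m, Nat.mod_lt i hm⟩) (fun r _ ↦ hx_mem j r)
      (fun _ _ ↦ mem_univ _) (fun r _ ↦ Fin.ext (hx_mod j r)) (fun _ hi ↦ hx_eq hi)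
      (fun _ _ ↦ rfl)).symm
  -- `x j` remembers `j`: it is the element of the window in the residue class of `j`.
  have hx_inj : Function.Injective x := by
    intro j j' h
    have h₁ := hx_eq (left_mem_Ico.2 (Nat.lt_add_of_pos_right (n := j) hm))
    have h₂ := hx_eq (left_mem_Ico.2 (Nat.lt_add_of_pos_right (n := j') hm))
    have h₃ := mem_Ico.1 (hx_mem j' ⟨j % m, Nat.mod_lt j hm⟩)
    have h₄ := mem_Ico.1 (hx_mem j ⟨j' % m, Nat.mod_lt j' hm⟩)
    rw [h] at h₁
    rw [← h] at h₂
    omega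
  have hx_pi : J.image x ⊆ Fintype.piFinset fun r : Fin m ↦ {i ∈ s | i % m = r} := by
    simp only [subset_iff, mem_image, Fintype.mem_piFinset, mem_filter]
    rintro _ ⟨j, hj, rfl⟩ r
    exact ⟨hJ j hj (hx_mem j r), hx_mod j r⟩
  calc ∑ j ∈ J, ∏ i ∈ Ico j (j + m), f i = ∑ g ∈ J.image x, ∏ r, f (g r) := by
        rw [sum_image hx_inj.injOn]
        exact sum_congr rfl fun j _ ↦ hx_window j
    _ ≤ ∑ g ∈ Fintype.piFinset fun r : Fin m ↦ {i ∈ s | i % m = r}, ∏ r, f (g r) :=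
        sum_le_sum_of_subset_of_nonneg hx_pi fun g hg _ ↦ prod_nonneg fun r _ ↦
          hf _ (mem_filter.1 (Fintype.mem_piFinset.1 hg r)).1
    _ = ∏ r : Fin m, ∑ i ∈ s with i % m = r, f i := (prod_univ_sum _ _).symm
    _ = ∏ r ∈ range m, ∑ i ∈ s with i % m = r, f i :=
        Fin.prod_univ_eq_prod_range (fun r ↦ ∑ i ∈ s with i % m = r, f i) m

/-- For positive integers `m ≤ n` and non-negative integers
`a_1, …, a_n` with `∑ a_i = n`, we have
`∑_{j=1}^{n-m+1} a_j a_{j+1} ⋯ a_{j+m-1} ≤ (n/m)^m` (over the reals). -/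
theorem stmt_0 (n m : ℕ) (hm : 0 < m) (hmn : m ≤ n) (a : ℕ → ℕ)
    (hsum : ∑ i ∈ Finset.Icc 1 n, a i = n) :
    ∑ j ∈ Finset.Icc 1 (n - m + 1), ∏ i ∈ Finset.Ico j (j + m), (a i : ℝ)
      ≤ ((n : ℝ) / (m : ℝ)) ^ m := by
  have hwindows : ∀ j ∈ Icc 1 (n - m + 1), Ico j (j + m) ⊆ Icc 1 n := by
    intro j hj i hi
    simp only [mem_Icc, mem_Ico] at hj hi ⊢
    omega
  have hclasses : ∑ r ∈ range m, ∑ i ∈ Icc 1 n with i % m = r, (a i : ℝ) = n := by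
    rw [sum_fiberwise_of_maps_to fun i _ ↦ mem_range.2 (Nat.mod_lt i hm)]
    exact_mod_cast hsum
  calc ∑ j ∈ Icc 1 (n - m + 1), ∏ i ∈ Ico j (j + m), (a i : ℝ)
      ≤ ∏ r ∈ range m, ∑ i ∈ Icc 1 n with i % m = r, (a i : ℝ) :=
        sum_prod_Ico_le_prod_sum_mod hm hwindows fun i _ ↦ Nat.cast_nonneg _
    _ ≤ ((∑ r ∈ range m, ∑ i ∈ Icc 1 n with i % m = r, (a i : ℝ)) / #(range m)) ^ #(range m) :=
        Real.prod_le_sum_div_card_pow _ fun r _ ↦ sum_nonneg fun i _ ↦ Nat.cast_nonneg _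
    _ = ((n : ℝ) / m) ^ m := by rw [hclasses, card_range]
end

section
/- In a simple directed graph $\vec{G}$ in which every directed cycle has length belonging to a finite set $L$, if $v$ is the final vertex of a directed path of maximum length in $\vec{G}$, then the out-degree of $v$ is at most $|L|$. -/
/-- The arc set of a directed cycle of length `len = m + 2` in a digraph `G`:
an injective map `f : ZMod (m+2) → V` with `G (f i) (f (i+1))` for all `i`,
whose consecutive-pair arcs form exactly the finset `s`. -/
def IsDirCycleArcs {V : Type*} [DecidableEq V] (G : V → V → Prop)
    (s : Finset (V × V)) (len : ℕ) : Prop :=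
  ∃ m : ℕ, len = m + 2 ∧ ∃ f : ZMod (m + 2) → V, Function.Injective f ∧
    (∀ i, G (f i) (f (i + 1))) ∧
    s = Finset.image (fun i => (f i, f (i + 1))) Finset.univ

/-- `f` is a directed path of length `len` in `G` (vertices `f 0, …, f len`,
pairwise distinct, with consecutive arcs). -/
def IsDirPathOn {V : Type*} (G : V → V → Prop) (f : ℕ → V) (len : ℕ) : Prop :=
  Set.InjOn f (Set.Iic len) ∧ ∀ i < len, G (f i) (f (i + 1))

/-- In a simple digraph all of whose directed cycles have length
in the finite set `L`, the final vertex of a directed path of maximum length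
has out-degree at most `|L|`. -/
theorem stmt_2 {V : Type*} [DecidableEq V] (G : V → V → Prop)
    (hirr : Irreflexive G) (L : Finset ℕ)
    (hcyc : ∀ s len, IsDirCycleArcs G s len → len ∈ L)
    (f : ℕ → V) (len : ℕ) (hpath : IsDirPathOn G f len)
    (hmax : ∀ (g : ℕ → V) (l : ℕ), IsDirPathOn G g l → l ≤ len) :
    {w | G (f len) w}.ncard ≤ L.card := by
  classical
  -- Step 1: every out-neighbor of `f len` lies strictly before on the path.
  have key : ∀ w, G (f len) w → ∃ i < len, f i = w := by
    intro w hw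
    by_contra h
    push_neg at h
    have hne : ∀ i ≤ len, f i ≠ w := by
      intro i hi
      rcases lt_or_eq_of_le hi with hlt | rfl
      · exact h i hlt
      · rintro rfl; exact hirr _ hw
    set g : ℕ → V := fun j => if j ≤ len then f j else w with hg
    have hgpath : IsDirPathOn G g (len + 1) := by
      constructor
      · intro a ha b hb hab
        simp only [Set.mem_Iic] at ha hb
        by_cases ha' : a ≤ len <;> by_cases hb' : b ≤ len
        · exact hpath.1 ha' hb' (by simpa [hg, ha', hb'] using hab)
        · exact absurd (by simpa [hg, ha', hb'] using hab) (hne a ha')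
        · exact absurd (by simpa [hg, ha', hb'] using hab.symm) (hne b hb')
        · omega
      · intro i hi
        by_cases hi' : i < len
        · have h1 : i ≤ len := hi'.le
          have h2 : i + 1 ≤ len := hi'
          simpa [hg, h1, h2] using hpath.2 i hi'
        · have : i = len := by omega
          subst this
          simpa [hg] using hw
    exact absurd (hmax g (len + 1) hgpath) (by omega)
  -- Step 2: the cycle through `f i, …, f len` has length `len - i + 1 ∈ L`.
  have keyL : ∀ i < len, G (f len) (f i) → len - i + 1 ∈ L := by
    intro i hi hw
    obtain ⟨m, hm⟩ : ∃ m, len - i - 1 = m := ⟨_, rfl⟩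
    have hmlen : len = i + m + 1 := by omega
    haveI : Fact (1 < m + 2) := ⟨by omega⟩
    set g : ZMod (m + 2) → V := fun k => f (i + k.val) with hg
    have hval : ∀ k : ZMod (m + 2), k.val < m + 2 := fun k => ZMod.val_lt k
    have hle : ∀ k : ZMod (m + 2), i + k.val ≤ len := by
      intro k; have := hval k; omega
    have hinj : Function.Injective g := by
      intro a b hab
      have : i + a.val = i + b.val :=
        hpath.1 (Set.mem_Iic.2 (hle a)) (Set.mem_Iic.2 (hle b)) hab
      exact ZMod.val_injective _ (by omega)
    have harc : ∀ k : ZMod (m + 2), G (g k) (g (k + 1)) := by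
      intro k
      have hadd : (k + 1).val = (k.val + 1) % (m + 2) := by
        rw [ZMod.val_add, ZMod.val_one]
      by_cases hk : k.val < m + 1
      · have : (k + 1).val = k.val + 1 := by rw [hadd, Nat.mod_eq_of_lt (by omega)]
        rw [hg]; simp only [this]
        have : i + k.val < len := by omega
        exact hpath.2 _ this
      · have hk' : k.val = m + 1 := by have := hval k; omega
        have h0 : (k + 1).val = 0 := by rw [hadd, hk']; simp
        rw [hg]; simp only [h0, hk']
        have : i + (m + 1) = len := by omega
        rw [this]; simpa using hw
    have : m + 2 ∈ L :=
      hcyc (Finset.image (fun k => (g k, g (k + 1))) Finset.univ) (m + 2)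
        ⟨m, rfl, g, hinj, harc, rfl⟩
    have : len - i + 1 = m + 2 := by omega
    rw [this]; assumption
  -- Step 3: bound the out-neighborhood by an image of `L`.
  have hsub : {w | G (f len) w} ⊆ ↑(L.image fun c => f (len + 1 - c)) := by
    intro w hw
    obtain ⟨i, hi, rfl⟩ := key w hw
    refine Finset.mem_coe.2 (Finset.mem_image.2 ⟨len - i + 1, keyL i hi hw, ?_⟩)
    congr 1; omega
  calc {w | G (f len) w}.ncard
      ≤ (L.image fun c => f (len + 1 - c)).card := by
        rw [← Set.ncard_coe_finset]
        exact Set.ncard_le_ncard hsub (Finset.finite_toSet _)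
    _ ≤ L.card := Finset.card_image_le
end

section
/- For integers $2 \le k \le n$, the digraph of Construction (partition into $V_0, \dots, V_{k-1}$ with $|V_0|=1$, the remaining $n-1$ vertices split as evenly as possible into $V_1, \dots, V_{k-1}$, and all arcs from $V_i$ to $V_{i+1 \bmod k}$) contains exactly $\prod_{i=0}^{k-2} \lfloor (n-1+i)/(k-1) \rfloor$ directed cycles. -/
/-!
A directed cycle of length `L` is an injective `f : ZMod L → V` along which the class `g`
goes up by one at each step. Going once around the cycle gives `k ∣ L`; walking `k` steps
from the unique vertex of class `0` returns to it, so `L ∣ k` by injectivity. Hence every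
cycle has length `k`, and rotated to start in `V₀` it is a section `c : ZMod k → V` of `g`,
determined by its arcs: the cycles are counted by `∏ᵢ |Vᵢ|`. A product of `M` factors from
`{q, q + 1}` with sum `N = qM + r` equals `q ^ (M - r) * (q + 1) ^ r`, and so does
`∏_{i < M} ⌊(N + i) / M⌋`.
-/

section

open Finset Function

namespace Nat

lemma add_div_of_lt {N M i : ℕ} (hi : i < M) :
    (N + i) / M = N / M + if M ≤ N % M + i then 1 else 0 := by
  rw [Nat.add_div (by omega), Nat.div_eq_of_lt hi, Nat.mod_eq_of_lt hi, add_zero]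

lemma add_div_eq_or_of_lt {N M i : ℕ} (hi : i < M) :
    (N + i) / M = N / M ∨ (N + i) / M = N / M + 1 := by
  rw [add_div_of_lt hi]
  split_ifs <;> simp

lemma prod_range_add_div (N M : ℕ) :
    ∏ i ∈ range M, (N + i) / M = (N / M) ^ (M - N % M) * (N / M + 1) ^ (N % M) := by
  rcases M.eq_zero_or_pos with rfl | hM
  · simp
  have hr : N % M ≤ M := (Nat.mod_lt N hM).le
  rw [show range M = range (M - N % M + N % M) by rw [Nat.sub_add_cancel hr], prod_range_add]
  congr 1
  · refine (prod_eq_pow_card fun i hi => ?_).trans (by rw [card_range])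
    rw [add_div_of_lt (by simp at hi; omega), if_neg (by simp at hi; omega), add_zero]
  · refine (prod_eq_pow_card fun i hi => ?_).trans (by rw [card_range])
    rw [add_div_of_lt (by simp at hi; omega), if_pos (by omega)]

end Nat

namespace Finset

variable {ι : Type*} {s : Finset ι} {c : ι → ℕ}

lemma prod_eq_pow_mul_pow_of_eq_or_eq_succ {q r : ℕ} (hc : ∀ i ∈ s, c i = q ∨ c i = q + 1)
    (hsum : ∑ i ∈ s, c i = q * #s + r) :
    ∏ i ∈ s, c i = q ^ (#s - r) * (q + 1) ^ r := by
  classical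
  set A := s.filter (c · = q + 1)
  have hA : ∀ i ∈ A, c i = q + 1 := fun i hi => (mem_filter.mp hi).2
  have hB : ∀ i ∈ s.filter (¬c · = q + 1), c i = q := fun i hi =>
    (hc i (mem_filter.mp hi).1).resolve_right (mem_filter.mp hi).2
  have hcard : #A + #(s.filter (¬c · = q + 1)) = #s := card_filter_add_card_filter_not _
  have hAr : #A = r := by
    rw [← sum_filter_add_sum_filter_not s (c · = q + 1), sum_congr rfl hA, sum_congr rfl hB,
      sum_const, sum_const, smul_eq_mul, smul_eq_mul] at hsum
    nlinarith
  rw [← prod_filter_mul_prod_filter_not s (c · = q + 1), prod_congr rfl hA, prod_congr rfl hB,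
    prod_const, prod_const, hAr, mul_comm, show #(s.filter (¬c · = q + 1)) = #s - r by omega]

lemma prod_eq_prod_range_add_div {M N : ℕ} (hs : #s = M)
    (hc : ∀ i ∈ s, c i = N / M ∨ c i = (N + (M - 1)) / M) (hsum : ∑ i ∈ s, c i = N) :
    ∏ i ∈ s, c i = ∏ i ∈ range M, (N + i) / M := by
  rcases M.eq_zero_or_pos with rfl | hM
  · simp [card_eq_zero.mp hs]
  rw [Nat.prod_range_add_div, prod_eq_pow_mul_pow_of_eq_or_eq_succ (q := N / M), hs]
  · intro i hi
    rcases hc i hi with h | h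
    · exact .inl h
    · rw [h]; exact Nat.add_div_eq_or_of_lt (by omega)
  · rw [hsum, hs, mul_comm, Nat.div_add_mod]

end Finset

variable {V : Type*}

def cycleArcs [DecidableEq V] {L : ℕ} [NeZero L] (f : ZMod L → V) : Finset (V × V) :=
  univ.image fun i => (f i, f (i + 1))

lemma cycleArcs_comp_add_right [DecidableEq V] {L : ℕ} [NeZero L] (f : ZMod L → V)
    (a : ZMod L) : cycleArcs (fun i => f (i + a)) = cycleArcs f := by
  have hshift : (fun i => (f (i + a), f (i + 1 + a)))
      = (fun i => (f i, f (i + 1))) ∘ Equiv.addRight a := by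
    funext i; simp [add_right_comm]
  rw [cycleArcs, cycleArcs, hshift, ← image_image, image_univ_equiv]

section Coloring

variable {k : ℕ} {g : V → ZMod k} {L : ℕ} {f : ZMod L → V}

lemma map_add_natCast_of_map_succ (hf : ∀ i, g (f (i + 1)) = g (f i) + 1) (i : ZMod L)
    (j : ℕ) : g (f (i + j)) = g (f i) + j := by
  induction j with
  | zero => simp
  | succ j ih => rw [Nat.cast_succ, ← add_assoc, hf, ih, Nat.cast_succ, add_assoc]

lemma dvd_of_map_succ (hf : ∀ i, g (f (i + 1)) = g (f i) + 1) : k ∣ L := by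
  have h := map_add_natCast_of_map_succ hf 0 L
  rwa [ZMod.natCast_self, add_zero, left_eq_add, ZMod.natCast_eq_zero_iff] at h

lemma eq_of_injective_of_map_succ [NeZero k] (h0 : ∀ u v, g u = 0 → g v = 0 → u = v)
    (hinj : Injective f) (hf : ∀ i, g (f (i + 1)) = g (f i) + 1) : L = k := by
  refine Nat.dvd_antisymm ?_ (dvd_of_map_succ hf)
  set i : ZMod L := Nat.cast (-g (f 0)).val
  have hi : g (f i) = 0 := by
    rw [← zero_add i, map_add_natCast_of_map_succ hf, ZMod.natCast_zmod_val, add_neg_cancel]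
  have hik : g (f (i + k)) = 0 := by
    rw [map_add_natCast_of_map_succ hf, hi, ZMod.natCast_self, add_zero]
  have := hinj (h0 _ _ hik hi)
  rwa [add_eq_left, ZMod.natCast_eq_zero_iff] at this

end Coloring

section Sections

variable {k : ℕ} [NeZero k] {g : V → ZMod k}

lemma map_eq_map_zero_add_of_map_succ {f : ZMod k → V} (hf : ∀ i, g (f (i + 1)) = g (f i) + 1)
    (i : ZMod k) : g (f i) = g (f 0) + i := by
  simpa [ZMod.natCast_zmod_val] using map_add_natCast_of_map_succ hf 0 i.val

variable [DecidableEq V]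

lemma cycleArcs_injOn : Set.InjOn cycleArcs {c : ZMod k → V | ∀ i, g (c i) = i} := by
  intro c hc c' hc' h
  funext i
  have hmem : (c i, c (i + 1)) ∈ cycleArcs c' := h ▸ mem_image_of_mem _ (mem_univ i)
  obtain ⟨j, -, hj⟩ := mem_image.mp hmem
  obtain ⟨hj, -⟩ := Prod.mk.inj hj
  have hji : j = i := by rw [← hc' j, hj, hc i]
  rw [← hj, hji]

lemma setOf_isDirCycleArcs_eq_image (hk : 2 ≤ k) (h0 : ∀ u v, g u = 0 → g v = 0 → u = v) :
    {s | ∃ len, IsDirCycleArcs (fun u v => g v = g u + 1) s len}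
      = cycleArcs '' {c : ZMod k → V | ∀ i, g (c i) = i} := by
  ext s
  constructor
  · rintro ⟨-, m, -, f, hinj, hf, rfl⟩
    obtain rfl := eq_of_injective_of_map_succ h0 hinj hf
    refine ⟨fun i => f (i + -g (f 0)), fun i => ?_, cycleArcs_comp_add_right f _⟩
    rw [map_eq_map_zero_add_of_map_succ hf]
    ring
  · rintro ⟨c, hc, rfl⟩
    obtain ⟨m, rfl⟩ : ∃ m, k = m + 2 := ⟨k - 2, by omega⟩
    refine ⟨_, m, rfl, c, fun i j h => ?_, fun i => show g _ = _ by rw [hc, hc], rfl⟩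
    rw [← hc i, ← hc j, h]

variable [Fintype V]

lemma ncard_image_cycleArcs :
    (cycleArcs '' {c : ZMod k → V | ∀ i, g (c i) = i}).ncard = ∏ i, #{v | g v = i} := by
  rw [cycleArcs_injOn.ncard_image, ← Nat.card_coe_set_eq, Set.coe_ofPred,
    Nat.card_congr (Equiv.subtypePiEquivPi (β := fun _ : ZMod k => V) (p := fun i v => g v = i)),
    Nat.card_pi]
  simp [Nat.card_eq_fintype_card, Fintype.card_subtype]

end Sections

end

theorem stmt_7_general {V : Type*} [Fintype V] [DecidableEq V] (n k : ℕ)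
    (hk : 2 ≤ k) (hcard : Fintype.card V = n)
    (g : V → ZMod k)
    (h0 : (Finset.univ.filter fun v => g v = 0).card = 1)
    (hsize : ∀ i : ZMod k, i ≠ 0 →
      (Finset.univ.filter fun v => g v = i).card = (n - 1) / (k - 1) ∨
      (Finset.univ.filter fun v => g v = i).card = (n - 1 + (k - 2)) / (k - 1)) :
    {s : Finset (V × V) | ∃ len, IsDirCycleArcs (fun u v => g v = g u + 1) s len}.ncard
      = ∏ i ∈ Finset.range (k - 1), (n - 1 + i) / (k - 1) := by
  have : NeZero k := ⟨by omega⟩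
  have hunique : ∀ u v, g u = 0 → g v = 0 → u = v := fun u v hu hv =>
    Finset.card_le_one.mp h0.le u (by simpa) v (by simpa)
  have hsum : ∑ i ∈ Finset.univ.erase 0, (Finset.univ.filter fun v => g v = i).card
      = n - 1 := by
    have hsplit := Finset.add_sum_erase Finset.univ
      (fun i => (Finset.univ.filter fun v => g v = i).card) (Finset.mem_univ (0 : ZMod k))
    rw [h0, ← Finset.card_eq_sum_card_fiberwise fun v _ => Finset.mem_univ (g v),
      Finset.card_univ, hcard] at hsplit
    omega
  rw [setOf_isDirCycleArcs_eq_image hk hunique, ncard_image_cycleArcs,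
    ← Finset.mul_prod_erase Finset.univ _ (Finset.mem_univ 0), h0, one_mul]
  refine Finset.prod_eq_prod_range_add_div ?_ (fun i hi => ?_) hsum
  · rw [Finset.card_erase_of_mem (Finset.mem_univ _), Finset.card_univ, ZMod.card]
  · rw [show k - 1 - 1 = k - 2 by omega]
    exact hsize i (Finset.ne_of_mem_erase hi)

/-- The blow-up construction (classes given by `g : V → ZMod k`
with `|V_0| = 1`, the remaining `n - 1` vertices split as evenly as possible,
and all arcs from `V_i` to `V_{i+1}`) contains exactly
`∏_{i=0}^{k-2} ⌊(n-1+i)/(k-1)⌋` directed cycles. -/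
theorem stmt_7 {V : Type*} [Fintype V] [DecidableEq V] (n k : ℕ)
    (hk : 2 ≤ k) (hkn : k ≤ n) (hcard : Fintype.card V = n)
    (g : V → ZMod k)
    (h0 : (Finset.univ.filter fun v => g v = 0).card = 1)
    (hsize : ∀ i : ZMod k, i ≠ 0 →
      (Finset.univ.filter fun v => g v = i).card = (n - 1) / (k - 1) ∨
      (Finset.univ.filter fun v => g v = i).card = (n - 1 + (k - 2)) / (k - 1)) :
    {s : Finset (V × V) | ∃ len, IsDirCycleArcs (fun u v => g v = g u + 1) s len}.ncard
      = ∏ i ∈ Finset.range (k - 1), (n - 1 + i) / (k - 1) :=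
  stmt_7_general n k hk hcard g h0 hsize
end

section
/- Let $\vec{G}$ be a simple directed graph and for each vertex $u$ let $p(u)$ denote the length of a longest directed path ending at $u$. If every directed cycle of $\vec{G}$ has length at most $k$, then for every vertex $u$, the number of arcs $uv$ with $p(u) \ge p(v)$ is at most $k$. -/
/-- If every directed cycle of a simple digraph has length at
most `k`, and `p u` is the length of a longest directed path ending at `u`,
then every vertex `u` has at most `k` "bad" out-arcs `uv` (those with
`p u ≥ p v`). -/
theorem stmt_9 {V : Type*} [DecidableEq V] (G : V → V → Prop)
    (hirr : Irreflexive G) (k : ℕ)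
    (hcyc : ∀ s len, IsDirCycleArcs G s len → len ≤ k)
    (p : V → ℕ)
    (hp1 : ∀ u, ∃ f : ℕ → V, IsDirPathOn G f (p u) ∧ f (p u) = u)
    (hp2 : ∀ u (f : ℕ → V) (l : ℕ), IsDirPathOn G f l → f l = u → l ≤ p u) :
    ∀ u, {v | G u v ∧ p v ≤ p u}.ncard ≤ k := by
  intro u
  obtain ⟨f, ⟨hinj, hedge⟩, hfu⟩ := hp1 u
  have key : ∀ v, G u v → p v ≤ p u → ∃ i, i < p u ∧ f i = v ∧ p u + 1 ≤ i + k := by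
    intro v hGv hpv
    have hvu : v ≠ u := fun h => hirr u (h ▸ hGv)
    -- Step 1 : v lies on the path
    have hex : ∃ i, i < p u ∧ f i = v := by
      by_contra hcon
      push_neg at hcon
      have h' : ∀ i ≤ p u, f i ≠ v := by
        intro i hi
        rcases Nat.lt_or_ge i (p u) with h1 | h1
        · exact hcon i h1
        · have : i = p u := le_antisymm hi h1
          subst this
          rw [hfu]; exact fun h => hvu h.symm
      set g : ℕ → V := fun n => if n ≤ p u then f n else v with hg
      have hgpath : IsDirPathOn G g (p u + 1) := by
        constructor
        · intro a ha b hb hab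
          simp only [Set.mem_Iic] at ha hb
          by_cases ha' : a ≤ p u <;> by_cases hb' : b ≤ p u
          · exact hinj ha' hb' (by simpa [hg, ha', hb'] using hab)
          · have h3 : f a = v := by
              simp only [hg, if_pos ha', if_neg hb'] at hab; exact hab
            exact absurd h3 (h' a ha')
          · have h3 : f b = v := by
              simp only [hg, if_neg ha', if_pos hb'] at hab; exact hab.symm
            exact absurd h3 (h' b hb')
          · omega
        · intro i hi
          rcases Nat.lt_or_ge i (p u) with h1 | h1
          · have hgi : g i = f i := if_pos (Nat.le_of_lt h1)
            have h2 : g (i + 1) = f (i + 1) := if_pos h1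
            rw [hgi, h2]; exact hedge i h1
          · have hieq : i = p u := by omega
            subst hieq
            have hgi : g (p u) = f (p u) := if_pos le_rfl
            have h2 : g (p u + 1) = v := if_neg (by omega)
            rw [hgi, h2, hfu]; exact hGv
      have hgend : g (p u + 1) = v := by simp [hg]
      have := hp2 v g (p u + 1) hgpath hgend
      omega
    obtain ⟨i, hi, hfi⟩ := hex
    -- Step 2 : the cycle through the arc uv
    set m := p u - i - 1 with hmdef
    have hm : i + m + 1 = p u := by omega
    have hval : ∀ j : ZMod (m + 2), j.val < m + 2 := fun j => ZMod.val_lt j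
    have hone : (1 : ZMod (m + 2)).val = 1 :=
      haveI : Fact (1 < m + 2) := ⟨by omega⟩
      ZMod.val_one (m + 2)
    have hadd : ∀ j : ZMod (m + 2), (j + 1).val = (j.val + 1) % (m + 2) := by
      intro j; rw [ZMod.val_add, hone]
    set cg : ZMod (m + 2) → V := fun j => f (i + j.val) with hcg
    have hcginj : Function.Injective cg := by
      intro a b hab
      apply ZMod.val_injective (m + 2)
      have ha : i + a.val ≤ p u := by have := hval a; omega
      have hb : i + b.val ≤ p u := by have := hval b; omega
      have := hinj (Set.mem_Iic.2 ha) (Set.mem_Iic.2 hb) hab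
      omega
    have hcgedge : ∀ j, G (cg j) (cg (j + 1)) := by
      intro j
      rcases Nat.lt_or_ge j.val (m + 1) with h1 | h1
      · have h2 : (j + 1).val = j.val + 1 := by
          rw [hadd]; exact Nat.mod_eq_of_lt (by omega)
        have : i + j.val < p u := by omega
        have he := hedge (i + j.val) this
        simpa [hcg, h2, Nat.add_assoc] using he
      · have hj : j.val = m + 1 := by have := hval j; omega
        have h2 : (j + 1).val = 0 := by rw [hadd, hj]; simp
        simp only [hcg, h2, hj, Nat.add_zero]
        rw [show i + (m + 1) = p u by omega, hfu, hfi]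
        exact hGv
    have hlen := hcyc (Finset.image (fun j => (cg j, cg (j + 1))) Finset.univ) (m + 2)
      ⟨m, rfl, cg, hcginj, hcgedge, rfl⟩
    exact ⟨i, hi, hfi, by omega⟩
  -- Step 3 : counting
  have hsub : {v | G u v ∧ p v ≤ p u} ⊆ f '' Set.Ico (p u + 1 - k) (p u) := by
    rintro v ⟨h1, h2⟩
    obtain ⟨i, hi, hfi, hik⟩ := key v h1 h2
    exact ⟨i, ⟨by omega, hi⟩, hfi⟩
  calc {v | G u v ∧ p v ≤ p u}.ncard
      ≤ (f '' Set.Ico (p u + 1 - k) (p u)).ncard :=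
        Set.ncard_le_ncard hsub ((Set.finite_Ico _ _).image f)
    _ ≤ (Set.Ico (p u + 1 - k) (p u)).ncard :=
        Set.ncard_image_le (Set.finite_Ico _ _)
    _ ≤ k := by
        rw [show Set.Ico (p u + 1 - k) (p u) = ↑(Finset.Ico (p u + 1 - k) (p u)) by
              simp, Set.ncard_coe_finset, Nat.card_Ico]
        omega
end

section
/- Let $\vec{G}$ be a simple directed graph in which every directed cycle has length exactly $k$, and let $p(u)$ denote the length of a longest directed path ending at $u$. If $C$ is a directed cycle in $\vec{G}$ and $uv$ is the unique arc of $C$ with $p(u) \ge p(v)$, then $p(u) = p(v) + k - 1$. -/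
/-- In a simple digraph all of whose directed cycles have length
exactly `k`, with `p u` the length of a longest directed path ending at `u`:
if `C` is a directed cycle (given by `c : ZMod k → V`) whose unique bad arc
is `c i0 → c (i0+1)` (bad meaning `p` does not increase), then
`p (c i0) = p (c (i0+1)) + k - 1`. -/
theorem stmt_10 {V : Type*} [DecidableEq V] (G : V → V → Prop)
    (hirr : Irreflexive G) (k : ℕ) (hk : 2 ≤ k)
    (hcyc : ∀ s len, IsDirCycleArcs G s len → len = k)
    (p : V → ℕ)
    (hp1 : ∀ u, ∃ f : ℕ → V, IsDirPathOn G f (p u) ∧ f (p u) = u)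
    (hp2 : ∀ u (f : ℕ → V) (l : ℕ), IsDirPathOn G f l → f l = u → l ≤ p u)
    (c : ZMod k → V) (hcinj : Function.Injective c)
    (hcadj : ∀ i, G (c i) (c (i + 1)))
    (i0 : ZMod k) (hbad : p (c (i0 + 1)) ≤ p (c i0))
    (huniq : ∀ i, p (c (i + 1)) ≤ p (c i) → i = i0) :
    p (c i0) = p (c (i0 + 1)) + k - 1 := by
  have : NeZero k := ⟨by omega⟩
  set u := c i0 with hu
  set v := c (i0 + 1) with hv
  -- lower bound: chain of good arcs
  have chain : ∀ t : ℕ, t ≤ k - 1 → p v + t ≤ p (c (i0 + 1 + (t : ZMod k))) := by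
    intro t
    induction t with
    | zero => simp [hv]
    | succ n ih =>
      intro hn
      have h1 := ih (by omega)
      set i := i0 + 1 + (n : ZMod k) with hi
      have hne : i ≠ i0 := by
        intro h
        have h2 : ((1 + n : ℕ) : ZMod k) = 0 := by
          have : i0 + ((1 + n : ℕ) : ZMod k) = i0 + 0 := by
            push_cast; rw [add_zero]; rw [hi] at h; linear_combination h
          exact add_left_cancel this
        have := (ZMod.natCast_eq_zero_iff _ _).mp h2
        have := Nat.le_of_dvd (by omega) this
        omega
      have hlt : p (c i) < p (c (i + 1)) := by
        by_contra h
        push_neg at h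
        exact hne (huniq i h)
      have he : i + 1 = i0 + 1 + ((n + 1 : ℕ) : ZMod k) := by push_cast; ring
      rw [← he]; omega
  have hlow : p v + (k - 1) ≤ p u := by
    have h1 := chain (k - 1) le_rfl
    have hcast : ((k - 1 : ℕ) : ZMod k) = -1 := by
      have h2 : ((k : ℕ) : ZMod k) = 0 := ZMod.natCast_self k
      rw [Nat.cast_sub (by omega : 1 ≤ k), h2]; ring
    rw [hcast] at h1
    have : i0 + 1 + (-1) = i0 := by ring
    rwa [this] at h1
  -- upper bound
  obtain ⟨f, hf, hfu⟩ := hp1 u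
  set L := p u with hL
  -- v occurs on f
  have hmem : ∃ j ≤ L, f j = v := by
    by_contra h
    push_neg at h
    set f' : ℕ → V := fun n => if n ≤ L then f n else v with hf'
    have hpath : IsDirPathOn G f' (L + 1) := by
      constructor
      · intro a ha b hb hab
        simp only [Set.mem_Iic] at ha hb
        rcases Nat.lt_succ_iff_lt_or_eq.mp (Nat.lt_succ_of_le ha) with ha' | ha' <;>
          rcases Nat.lt_succ_iff_lt_or_eq.mp (Nat.lt_succ_of_le hb) with hb' | hb'
        · have ha2 : a ≤ L := by omega
          have hb2 : b ≤ L := by omega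
          simp only [hf', if_pos ha2, if_pos hb2] at hab
          exact hf.1 ha2 hb2 hab
        · have ha2 : a ≤ L := by omega
          simp only [hf', if_pos ha2, hb', if_neg (by omega : ¬ L + 1 ≤ L)] at hab
          exact absurd hab (h a ha2)
        · have hb2 : b ≤ L := by omega
          simp only [hf', if_pos hb2, ha', if_neg (by omega : ¬ L + 1 ≤ L)] at hab
          exact absurd hab.symm (h b hb2)
        · omega
      · intro i hi
        rcases Nat.lt_succ_iff_lt_or_eq.mp hi with hi' | hi'
        · have h1 : i ≤ L := by omega
          have h2 : i + 1 ≤ L := by omega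
          simp only [hf', if_pos h1, if_pos h2]
          exact hf.2 i hi'
        · have h1 : i ≤ L := by omega
          have e1 : f' i = f i := by simp only [hf']; rw [if_pos h1]
          have e2 : f' (i + 1) = v := by
            simp only [hf']; rw [if_neg (by omega : ¬ i + 1 ≤ L)]
          rw [e1, e2, hi', hfu]
          exact hcadj i0
    have hend : f' (L + 1) = v := by simp [hf']
    have := hp2 v f' (L + 1) hpath hend
    omega
  obtain ⟨j, hjL, hjv⟩ := hmem
  have hGuv : G u v := hcadj i0
  have huv : u ≠ v := fun h => hirr v (h ▸ hGuv)
  have hjL' : j < L := by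
    rcases Nat.lt_or_ge j L with h | h
    · exact h
    · have : j = L := by omega
      rw [this, hfu] at hjv
      exact absurd hjv.symm huv.symm
  -- build the cycle f j, f (j+1), ..., f L, back to f j
  set m := L - j - 1 with hm
  have hm2 : j + (m + 1) = L := by omega
  set g : ZMod (m + 2) → V := fun t => f (j + t.val) with hg
  have hval : ∀ t : ZMod (m + 2), j + t.val ≤ L := by
    intro t
    have := ZMod.val_lt t
    omega
  have hginj : Function.Injective g := by
    intro a b hab
    have := hf.1 (hval a) (hval b) hab
    have hval2 : a.val = b.val := by omega
    exact ZMod.val_injective _ hval2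
  have hgadj : ∀ i : ZMod (m + 2), G (g i) (g (i + 1)) := by
    intro i
    haveI : Fact (1 < m + 2) := ⟨by omega⟩
    have h1v : (1 : ZMod (m + 2)).val = 1 := ZMod.val_one _
    have hiv := ZMod.val_lt i
    rcases Nat.lt_or_ge i.val (m + 1) with h | h
    · have h1 : (i + 1).val = i.val + 1 := by
        rw [ZMod.val_add_of_lt] <;> rw [h1v]
        omega
      simp only [hg, h1]
      rw [← add_assoc]
      exact hf.2 (j + i.val) (by omega)
    · have hieq : i.val = m + 1 := by omega
      have h0 : (i + 1) = 0 := by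
        have : i = ((m + 1 : ℕ) : ZMod (m + 2)) := by
          rw [← ZMod.natCast_zmod_val i, hieq]
        rw [this]
        push_cast
        rw [show ((m : ZMod (m+2)) + 1 + 1) = ((m + 2 : ℕ) : ZMod (m + 2)) by push_cast; ring,
          ZMod.natCast_self]
      simp only [hg, h0, hieq, ZMod.val_zero, Nat.add_zero, hm2, hfu, hjv]
      exact hcadj i0
  have hcyck : m + 2 = k := by
    refine hcyc (Finset.image (fun i => (g i, g (i + 1))) Finset.univ) (m + 2) ?_
    exact ⟨m, rfl, g, hginj, hgadj, rfl⟩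
  -- path f up to j ends at v
  have hjp : j ≤ p v := by
    refine hp2 v f j ⟨hf.1.mono (Set.Iic_subset_Iic.mpr (by omega)), ?_⟩ hjv
    intro i hi
    exact hf.2 i (by omega)
  omega
end

section
/- Let $k \ge 1$ and let $G$ be a simple undirected graph on $n \ge 2k+1$ vertices in which every cycle has length exactly $2k+1$. Then the number of cycles in $G$ is at most $\lfloor (n-1)/(2k) \rfloor$. -/
/-- The edge set of a cycle of length `len = m + 3` in a simple graph `G`:
there is an injective map `f : ZMod (m+3) → V` with consecutive images
adjacent, whose consecutive-pair edges form exactly the finset `s`. -/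
def IsCycleEdges {V : Type*} [DecidableEq V] (G : SimpleGraph V)
    (s : Finset (Sym2 V)) (len : ℕ) : Prop :=
  ∃ m : ℕ, len = m + 3 ∧ ∃ f : ZMod (m + 3) → V, Function.Injective f ∧
    (∀ i, G.Adj (f i) (f (i + 1))) ∧
    s = Finset.image (fun i => s(f i, f (i + 1))) Finset.univ

/-!
Every cycle is an even edge set (each vertex lies on an even number of its edges), even edge sets
are closed under symmetric difference, and a nonempty even edge set contains a cycle, since a
forest with an edge has a leaf. Peeling off cycles one at a time, every even edge set of `G` has
size divisible by `L = 2k + 1`. For distinct cycles `C`, `D` this gives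
`L ∣ |C ∆ D| = 2L - 2|C ∩ D|`, which forces `C ∩ D = ∅` because `L` is odd. Deleting one edge
from each of the `t` pairwise edge-disjoint cycles leaves a forest with `t * 2k` edges, so
`t * 2k ≤ n - 1`.
-/

open SimpleGraph Finset
open scoped symmDiff

lemma ZMod.natCast_ne_zero_of_pos_of_lt {a n : ℕ} (ha : 0 < a) (han : a < n) :
    (a : ZMod n) ≠ 0 := by
  rw [Ne, ZMod.natCast_eq_zero_iff]
  exact Nat.not_dvd_of_pos_of_lt ha han

lemma Finset.card_symmDiff_add_two_mul_card_inter {α : Type*} [DecidableEq α] (s t : Finset α) :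
    #(s ∆ t) + 2 * #(s ∩ t) = #s + #t := by
  rw [symmDiff_def, sup_eq_union, card_union_of_disjoint disjoint_sdiff_sdiff]
  have hs := card_sdiff_add_card_inter s t
  have ht := card_sdiff_add_card_inter t s
  rw [inter_comm] at ht
  omega

section

variable {V : Type*}

def IsEvenEdgeSet [DecidableEq V] (F : Finset (Sym2 V)) : Prop :=
  ∀ v, Even #{e ∈ F | v ∈ e}

lemma IsEvenEdgeSet.symmDiff [DecidableEq V] {F D : Finset (Sym2 V)} (hF : IsEvenEdgeSet F)
    (hD : IsEvenEdgeSet D) : IsEvenEdgeSet (F ∆ D) := by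
  intro v
  have hfilter : {e ∈ F ∆ D | v ∈ e} = {e ∈ F | v ∈ e} ∆ {e ∈ D | v ∈ e} := by
    ext e
    simp only [mem_filter, mem_symmDiff]
    tauto
  have hsum := (hF v).add (hD v)
  rw [← card_symmDiff_add_two_mul_card_inter, ← hfilter] at hsum
  exact (Nat.even_add.mp hsum).mpr (even_two_mul _)

lemma SimpleGraph.Walk.IsCycle.isCycleEdges [DecidableEq V] {G : SimpleGraph V} {u : V}
    {c : G.Walk u u} (hc : c.IsCycle) : IsCycleEdges G c.edges.toFinset c.length := by
  obtain ⟨m, hm⟩ : ∃ m, c.length = m + 3 :=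
    ⟨c.length - 3, by have := hc.three_le_length; omega⟩
  have : Fact (1 < m + 3) := ⟨by omega⟩
  have hsucc : ∀ i : ZMod (m + 3), c.getVert (i + 1).val = c.getVert (i.val + 1) := by
    intro i
    rw [ZMod.val_add, ZMod.val_one]
    rcases (i.val + 1).lt_or_ge (m + 3) with h | h
    · rw [Nat.mod_eq_of_lt h]
    · have hi : i.val + 1 = m + 3 := by have := i.val_lt; omega
      rw [hi, Nat.mod_self, getVert_zero, ← hm, getVert_length]
  refine ⟨m, hm, fun i => c.getVert i.val, fun i j hij => ?_, fun i => ?_, ?_⟩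
  · have := i.val_lt
    have := j.val_lt
    exact ZMod.val_injective _ <| hc.getVert_injOn' (by simp; omega) (by simp; omega) hij
  · show G.Adj (c.getVert i.val) (c.getVert (i + 1).val)
    rw [hsucc]
    exact c.adj_getVert_succ (by have := i.val_lt; omega)
  · ext e
    simp only [List.mem_toFinset, mem_image, mem_univ, true_and, hsucc]
    constructor
    · intro he
      obtain ⟨i, hi, rfl⟩ := List.mem_iff_getElem.mp he
      rw [length_edges, hm] at hi
      refine ⟨i, ?_⟩
      rw [getElem_edges, ZMod.val_natCast_of_lt hi]
    · rintro ⟨i, rfl⟩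
      exact c.mk_mem_edges_iff_exists.mpr ⟨i.val, by have := i.val_lt; omega, rfl⟩

namespace IsCycleEdges

variable [DecidableEq V] {G : SimpleGraph V} {s : Finset (Sym2 V)} {len : ℕ}

lemma mono {H : SimpleGraph V} (hGH : G ≤ H) (h : IsCycleEdges G s len) :
    IsCycleEdges H s len := by
  obtain ⟨m, hm, f, hf, hadj, hs⟩ := h
  exact ⟨m, hm, f, hf, fun i => hGH (hadj i), hs⟩

lemma coe_subset_edgeSet (h : IsCycleEdges G s len) : (s : Set (Sym2 V)) ⊆ G.edgeSet := by
  obtain ⟨m, -, f, -, hadj, rfl⟩ := h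
  intro e he
  obtain ⟨i, -, rfl⟩ := mem_image.mp he
  exact hadj i

lemma card_eq (h : IsCycleEdges G s len) : #s = len := by
  obtain ⟨m, rfl, f, hf, -, rfl⟩ := h
  have h2 : (2 : ZMod (m + 3)) ≠ 0 :=
    mod_cast ZMod.natCast_ne_zero_of_pos_of_lt (a := 2) (n := m + 3) two_pos (by omega)
  refine (card_image_of_injective _ fun i j hij => ?_).trans (ZMod.card _)
  rcases Sym2.eq_iff.mp hij with ⟨hij, -⟩ | ⟨hij, hji⟩
  · exact hf hij
  · exact absurd (by linear_combination hf hji - hf hij) h2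

lemma nonempty (h : IsCycleEdges G s len) : s.Nonempty := by
  rw [← card_pos, h.card_eq]
  obtain ⟨m, rfl, -⟩ := h
  omega

lemma isEvenEdgeSet (h : IsCycleEdges G s len) : IsEvenEdgeSet s := by
  obtain ⟨m, -, f, hf, -, rfl⟩ := h
  intro v
  by_cases hv : ∃ i, f i = v
  · obtain ⟨i, rfl⟩ := hv
    have h1 : (1 : ZMod (m + 3)) ≠ 0 :=
      mod_cast ZMod.natCast_ne_zero_of_pos_of_lt (a := 1) (n := m + 3) one_pos (by omega)
    have h2 : (2 : ZMod (m + 3)) ≠ 0 :=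
      mod_cast ZMod.natCast_ne_zero_of_pos_of_lt (a := 2) (n := m + 3) two_pos (by omega)
    have hpair : {e ∈ image (fun j => s(f j, f (j + 1))) univ | f i ∈ e}
        = {s(f (i - 1), f i), s(f i, f (i + 1))} := by
      ext e
      simp only [mem_filter, mem_image, mem_univ, true_and, mem_insert, mem_singleton]
      constructor
      · rintro ⟨⟨j, rfl⟩, hmem⟩
        rcases Sym2.mem_iff.mp hmem with hj | hj
        · rw [hf hj]
          exact Or.inr rfl
        · rw [show j = i - 1 by linear_combination hf hj.symm, sub_add_cancel]
          exact Or.inl rfl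
      · rintro (rfl | rfl)
        · exact ⟨⟨i - 1, by rw [sub_add_cancel]⟩, Sym2.mem_mk_right _ _⟩
        · exact ⟨⟨i, rfl⟩, Sym2.mem_mk_left _ _⟩
    have hne : s(f (i - 1), f i) ≠ s(f i, f (i + 1)) := by
      intro heq
      rcases Sym2.eq_iff.mp heq with ⟨he, -⟩ | ⟨he, -⟩
      · exact h1 (by linear_combination -hf he)
      · exact h2 (by linear_combination -hf he)
    rw [hpair, card_pair hne]
    exact even_two
  · push Not at hv
    rw [card_eq_zero.mpr (filter_eq_empty_iff.mpr fun e he hve => ?_)]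
    · exact ⟨0, rfl⟩
    · obtain ⟨j, -, rfl⟩ := mem_image.mp he
      rcases Sym2.mem_iff.mp hve with h | h
      · exact hv j h.symm
      · exact hv (j + 1) h.symm

end IsCycleEdges

lemma SimpleGraph.IsAcyclic.exists_existsUnique_adj {G : SimpleGraph V} [Finite G.edgeSet]
    (hG : G.IsAcyclic) {a b : V} (hab : G.Adj a b) : ∃ v, ∃! w, G.Adj v w := by
  have : Nonempty V := ⟨a⟩
  obtain ⟨u, v, p, hp, hmax⟩ := Walk.exists_isPath_forall_isPath_length_le_length G
  have hnil : ¬p.Nil := fun hnil => by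
    simpa [hnil.length_eq_zero] using hmax a b _ (Path.singleton hab).2
  refine ⟨u, p.snd, p.adj_snd hnil, fun w hw => hG.eq_snd_of_adj_start hp hw ?_⟩
  by_contra hwp
  simpa using hmax _ _ _ (hp.cons hwp (h := hw.symm))

lemma SimpleGraph.IsAcyclic.natCard_edgeSet_le [Finite V] {G : SimpleGraph V}
    (hG : G.IsAcyclic) : Nat.card G.edgeSet ≤ Nat.card V - 1 := by
  cases isEmpty_or_nonempty V
  · simp
  obtain ⟨T, hGT, -, hT⟩ := connected_top.exists_isTree_le_of_le_of_isAcyclic le_top hG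
  have hGT' : Nat.card G.edgeSet ≤ Nat.card T.edgeSet :=
    Nat.card_mono (Set.toFinite _) (edgeSet_mono hGT)
  have := (isTree_iff_connected_and_card.mp hT).2
  omega

lemma SimpleGraph.edgeSet_fromEdgeSet_of_subset {G : SimpleGraph V} {F : Set (Sym2 V)}
    (hFG : F ⊆ G.edgeSet) :
    (fromEdgeSet F).edgeSet = F := by
  rw [edgeSet_fromEdgeSet]
  exact sdiff_eq_left.mpr <| Set.disjoint_left.mpr fun e heF =>
    G.not_isDiag_of_mem_edgeSet (hFG heF)

section EdgeFinset

variable [DecidableEq V] {G : SimpleGraph V} {F : Finset (Sym2 V)}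

lemma exists_isCycleEdges_subset_of_not_isAcyclic (hFG : (F : Set (Sym2 V)) ⊆ G.edgeSet)
    (h : ¬(fromEdgeSet (F : Set (Sym2 V))).IsAcyclic) :
    ∃ Z ⊆ F, ∃ len, IsCycleEdges G Z len := by
  simp only [IsAcyclic, not_forall, not_not] at h
  obtain ⟨u, c, hc⟩ := h
  have hle : fromEdgeSet (F : Set (Sym2 V)) ≤ G := fun _ _ hab =>
    hFG ((fromEdgeSet_adj _).mp hab).1
  refine ⟨c.edges.toFinset, fun e he => ?_, c.length, hc.isCycleEdges.mono hle⟩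
  have := c.edges_subset_edgeSet (List.mem_toFinset.mp he)
  rw [edgeSet_fromEdgeSet_of_subset hFG] at this
  exact this

lemma IsEvenEdgeSet.exists_isCycleEdges_subset (hF : IsEvenEdgeSet F)
    (hFG : (F : Set (Sym2 V)) ⊆ G.edgeSet) (hne : F.Nonempty) :
    ∃ Z ⊆ F, ∃ len, IsCycleEdges G Z len := by
  refine exists_isCycleEdges_subset_of_not_isAcyclic hFG fun hacyc => ?_
  have hadj : ∀ {v w}, s(v, w) ∈ F → (fromEdgeSet (F : Set (Sym2 V))).Adj v w :=
    fun he => (fromEdgeSet_adj _).mpr ⟨he, G.ne_of_adj (hFG he)⟩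
  have : Finite (fromEdgeSet (F : Set (Sym2 V))).edgeSet := by
    rw [edgeSet_fromEdgeSet_of_subset hFG]
    infer_instance
  obtain ⟨e, he⟩ := hne
  induction e using Sym2.ind with | _ a b => ?_
  obtain ⟨v, w, hvw, huniq⟩ := hacyc.exists_existsUnique_adj (hadj he)
  have hleaf : {e ∈ F | v ∈ e} = {s(v, w)} := by
    ext e
    simp only [mem_filter, mem_singleton]
    constructor
    · rintro ⟨heF, hve⟩
      obtain ⟨x, rfl⟩ := Sym2.mem_iff_exists.mp hve
      rw [huniq x (hadj heF)]
    · rintro rfl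
      exact ⟨((fromEdgeSet_adj _).mp hvw).1, Sym2.mem_mk_left v w⟩
  have := hF v
  rw [hleaf, card_singleton] at this
  exact Nat.not_even_one this

lemma IsEvenEdgeSet.dvd_card {L : ℕ} (hcyc : ∀ s len, IsCycleEdges G s len → len = L)
    (hF : IsEvenEdgeSet F) (hFG : (F : Set (Sym2 V)) ⊆ G.edgeSet) : L ∣ #F := by
  induction F using Finset.strongInduction with
  | H F ih =>
  rcases F.eq_empty_or_nonempty with rfl | hne
  · simp
  obtain ⟨Z, hZF, len, hZ⟩ := hF.exists_isCycleEdges_subset hFG hne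
  have hrest : L ∣ #(F \ Z) := by
    refine ih _ (sdiff_ssubset hZF hZ.nonempty) ?_ (subset_trans (by simp) hFG)
    rw [← symmDiff_of_ge hZF]
    exact hF.symmDiff hZ.isEvenEdgeSet
  rw [← card_sdiff_add_card_eq_card hZF, hZ.card_eq, hcyc _ _ hZ]
  exact hrest.add (dvd_refl L)

end EdgeFinset

namespace IsCycleEdges

variable [DecidableEq V] {G : SimpleGraph V}

lemma disjoint_of_ne {L : ℕ} (hL : Odd L) (hcyc : ∀ s len, IsCycleEdges G s len → len = L)
    {C D : Finset (Sym2 V)} {lC lD : ℕ} (hC : IsCycleEdges G C lC) (hD : IsCycleEdges G D lD)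
    (hCD : C ≠ D) : Disjoint C D := by
  have hCL : #C = L := hC.card_eq.trans (hcyc _ _ hC)
  have hDL : #D = L := hD.card_eq.trans (hcyc _ _ hD)
  have hsub : ((C ∆ D : Finset (Sym2 V)) : Set (Sym2 V)) ⊆ G.edgeSet := fun e he => by
    rcases mem_symmDiff.mp he with ⟨he, -⟩ | ⟨he, -⟩
    · exact hC.coe_subset_edgeSet he
    · exact hD.coe_subset_edgeSet he
  obtain ⟨d, hd⟩ := (hC.isEvenEdgeSet.symmDiff hD.isEvenEdgeSet).dvd_card hcyc hsub
  have hcard := card_symmDiff_add_two_mul_card_inter C D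
  obtain ⟨j, rfl⟩ := hL
  have hd2 : d ≤ 2 :=
    Nat.le_of_mul_le_mul_left (show (2 * j + 1) * d ≤ (2 * j + 1) * 2 by omega) (by omega)
  interval_cases d
  · exact absurd (symmDiff_eq_bot.mp (card_eq_zero.mp (by omega))) hCD
  · omega
  · exact disjoint_iff_inter_eq_empty.mpr (card_eq_zero.mp (by omega))

end IsCycleEdges

lemma sum_card_le_card_sub_one_add_card [Fintype V] [DecidableEq V] {G : SimpleGraph V}
    {T : Finset (Finset (Sym2 V))} (hT : ∀ s, s ∈ T ↔ ∃ len, IsCycleEdges G s len)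
    (hdisj : (T : Set (Finset (Sym2 V))).PairwiseDisjoint id) :
    ∑ C ∈ T, #C ≤ Fintype.card V - 1 + #T := by
  choose pick hpick using fun C : T => (((hT C).mp C.2).choose_spec).nonempty
  set F := T.biUnion id \ univ.image pick
  have hFG : (F : Set (Sym2 V)) ⊆ G.edgeSet := fun e he => by
    obtain ⟨C, hC, heC⟩ := mem_biUnion.mp (mem_sdiff.mp he).1
    exact ((hT C).mp hC).choose_spec.coe_subset_edgeSet heC
  have hacyc : (fromEdgeSet (F : Set (Sym2 V))).IsAcyclic := by
    by_contra h
    obtain ⟨Z, hZF, hZ⟩ := exists_isCycleEdges_subset_of_not_isAcyclic hFG h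
    have hZT : Z ∈ T := (hT Z).mpr hZ
    exact (mem_sdiff.mp (hZF (hpick ⟨Z, hZT⟩))).2 (mem_image_of_mem _ (mem_univ _))
  have hF : #F ≤ Fintype.card V - 1 := by
    have := hacyc.natCard_edgeSet_le
    rwa [edgeSet_fromEdgeSet_of_subset hFG, Nat.card_coe_set_eq, Set.ncard_coe_finset,
      Nat.card_eq_fintype_card] at this
  have hpicks : #(univ.image pick) ≤ #T := card_image_le.trans (by simp)
  have hsd : #(T.biUnion id) - #(univ.image pick) ≤ #F := le_card_sdiff _ _
  rw [card_biUnion hdisj] at hsd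
  simp only [id] at hsd
  omega

end

theorem stmt_12_general {V : Type*} [Fintype V] [DecidableEq V] (G : SimpleGraph V)
    (k n : ℕ) (hk : 1 ≤ k) (hn : Fintype.card V = n)
    (hcyc : ∀ s len, IsCycleEdges G s len → len = 2 * k + 1) :
    {s : Finset (Sym2 V) | ∃ len, IsCycleEdges G s len}.ncard
      ≤ (n - 1) / (2 * k) := by
  rw [Set.ncard_eq_toFinset_card _ (Set.toFinite _), Nat.le_div_iff_mul_le (by omega)]
  set T := (Set.toFinite {s : Finset (Sym2 V) | ∃ len, IsCycleEdges G s len}).toFinset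
  have hT : ∀ s, s ∈ T ↔ ∃ len, IsCycleEdges G s len := fun s => Set.Finite.mem_toFinset _
  have hcycT : ∀ C ∈ T, IsCycleEdges G C (2 * k + 1) := fun C hC => by
    obtain ⟨len, h⟩ := (hT C).mp hC
    rwa [hcyc _ _ h] at h
  have hdisj : (T : Set (Finset (Sym2 V))).PairwiseDisjoint id := fun C hC D hD hCD =>
    (hcycT C hC).disjoint_of_ne (odd_two_mul_add_one k) hcyc (hcycT D hD) hCD
  have hsum : ∑ C ∈ T, #C = #T * (2 * k + 1) := sum_const_nat fun C hC => (hcycT C hC).card_eq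
  have hbound := sum_card_le_card_sub_one_add_card hT hdisj
  rw [hsum, hn, Nat.mul_succ] at hbound
  omega

/-- A simple graph on `n ≥ 2k+1` vertices all of whose cycles
have length exactly `2k+1` (with `k ≥ 1`) has at most `⌊(n-1)/(2k)⌋`
cycles. -/
theorem stmt_12 {V : Type*} [Fintype V] [DecidableEq V] (G : SimpleGraph V)
    (k n : ℕ) (hk : 1 ≤ k) (hn : Fintype.card V = n) (hnk : 2 * k + 1 ≤ n)
    (hcyc : ∀ s len, IsCycleEdges G s len → len = 2 * k + 1) :
    {s : Finset (Sym2 V) | ∃ len, IsCycleEdges G s len}.ncard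
      ≤ (n - 1) / (2 * k) :=
  stmt_12_general G k n hk hn hcyc
end

section
/- Let $L$ be a finite set of positive integers with smallest even element $2\ell$. There exists a constant $c = c(L)$ such that in every simple undirected graph $G$ whose cycle lengths all belong to $L$, for any two vertices $x, y$ and any $1 \le j \le \ell - 1$, the number of $x$–$y$ paths of length $j$ in $G$ is less than $c$. -/
def pathBound : ℕ → ℕ
  | 0 => 1
  | i + 1 => pathBound i + i ^ 2 * pathBound i ^ 2

theorem pathBound_mono : Monotone pathBound :=
  monotone_nat_of_le_succ fun _ => Nat.le_add_right _ _

theorem sq_mul_pathBound_sq_le (i : ℕ) : i ^ 2 * pathBound i ^ 2 ≤ pathBound (i + 1) :=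
  Nat.le_add_left _ _

theorem one_le_pathBound (i : ℕ) : 1 ≤ pathBound i :=
  pathBound_mono (Nat.zero_le i)

namespace SimpleGraph

variable {V : Type*} (G : SimpleGraph V)

def pathSet (j : ℕ) (x y : V) : Set (Fin (j + 1) → V) :=
  {f | Function.Injective f ∧ f 0 = x ∧ f (Fin.last j) = y ∧
    ∀ i : Fin j, G.Adj (f i.castSucc) (f i.succ)}

variable {G}

theorem pathSet_adj {j : ℕ} {x y : V} {f : Fin (j + 1) → V} (hf : f ∈ G.pathSet j x y)
    {k : ℕ} (hk : k < j) : G.Adj (f ⟨k, by omega⟩) (f ⟨k + 1, by omega⟩) :=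
  hf.2.2.2 ⟨k, hk⟩

theorem pathSet_subsingleton {j : ℕ} (hj : j ≤ 1) (x y : V) : (G.pathSet j x y).Subsingleton := by
  rintro f ⟨-, hf0, hfl, -⟩ g ⟨-, hg0, hgl, -⟩
  funext i
  obtain rfl | rfl : i = 0 ∨ i = Fin.last j := by
    simp only [Fin.ext_iff, Fin.val_zero, Fin.val_last]
    omega
  exacts [hf0.trans hg0.symm, hfl.trans hgl.symm]

def pathPrefix {j : ℕ} (f : Fin (j + 1) → V) (b : Fin (j + 1)) : Fin (b.val + 1) → V :=
  fun i => f (Fin.castLE b.isLt i)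

def pathSuffix {j : ℕ} (f : Fin (j + 1) → V) (b : Fin (j + 1)) : Fin (j - b.val + 1) → V :=
  fun i => f ⟨b + i, by omega⟩

theorem pathPrefix_mem {j : ℕ} {x y : V} {f : Fin (j + 1) → V} (hf : f ∈ G.pathSet j x y)
    (b : Fin (j + 1)) : pathPrefix f b ∈ G.pathSet b.val x (f b) := by
  refine ⟨fun i i' h => Fin.castLE_injective _ (hf.1 h), hf.2.1, rfl, fun i => ?_⟩
  exact pathSet_adj hf (k := i) (by omega)

theorem pathSuffix_mem {j : ℕ} {x y : V} {f : Fin (j + 1) → V} (hf : f ∈ G.pathSet j x y)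
    (b : Fin (j + 1)) : pathSuffix f b ∈ G.pathSet (j - b.val) (f b) y := by
  refine ⟨fun i i' h => ?_, rfl, ?_, fun i => pathSet_adj hf (k := b + i) (by omega)⟩
  · have := congrArg Fin.val (hf.1 h)
    simp only at this
    omega
  · exact (congrArg f (Fin.ext (by simp; omega))).trans hf.2.2.1

theorem eq_of_pathPrefix_eq_of_pathSuffix_eq {j : ℕ} {f g : Fin (j + 1) → V} {b : Fin (j + 1)}
    (hpre : pathPrefix f b = pathPrefix g b) (hsuf : pathSuffix f b = pathSuffix g b) :
    f = g := by
  funext i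
  rcases le_or_gt i.val b with hi | hi
  · simpa [pathPrefix, Fin.castLE] using congrFun hpre ⟨i, by omega⟩
  · simpa [pathSuffix, show b.val + (i - b) = i by omega] using congrFun hsuf ⟨i - b, by omega⟩

theorem encard_pathSet_filter_le {j : ℕ} (x y : V) (b : Fin (j + 1)) (v : V) :
    {f ∈ G.pathSet j x y | f b = v}.encard ≤
      (G.pathSet b.val x v).encard * (G.pathSet (j - b.val) v y).encard := by
  rw [← Set.encard_prod]
  refine Set.encard_le_encard_of_injOn (f := fun f => (pathPrefix f b, pathSuffix f b)) ?_
    fun _ _ _ _ h => eq_of_pathPrefix_eq_of_pathSuffix_eq (Prod.ext_iff.1 h).1 (Prod.ext_iff.1 h).2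
  rintro f ⟨hf, rfl⟩
  exact ⟨pathPrefix_mem hf b, pathSuffix_mem hf b⟩

theorem exists_isCycleEdges_of_injOn [DecidableEq V] {n : ℕ} (hn : 3 ≤ n) {g : ℕ → V}
    (hinj : Set.InjOn g (Set.Iio n)) (hclosed : g n = g 0)
    (hadj : ∀ k < n, G.Adj (g k) (g (k + 1))) : ∃ s, IsCycleEdges G s n := by
  obtain ⟨m, rfl⟩ : ∃ m, n = m + 3 := ⟨n - 3, by omega⟩
  refine ⟨_, m, rfl, fun i => g i.val,
    fun i i' h => ZMod.val_injective _ (hinj (ZMod.val_lt i) (ZMod.val_lt i') h), fun i => ?_, rfl⟩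
  have hi := ZMod.val_lt i
  have hsucc : (i + 1).val = (i.val + 1) % (m + 3) := by
    rw [ZMod.val_add, ZMod.val_one_eq_one_mod, Nat.mod_eq_of_lt (a := 1) (by omega)]
  show G.Adj (g i.val) (g (i + 1).val)
  rcases (Nat.add_one_le_of_lt hi).lt_or_eq with hlt | heq
  · rw [hsucc, Nat.mod_eq_of_lt hlt]
    exact hadj _ hi
  · rw [hsucc, heq, Nat.mod_self, ← hclosed]
    simpa only [heq] using hadj _ hi

def appendReverse {j : ℕ} (P Q : Fin (j + 1) → V) (k : ℕ) : V :=
  if h : k ≤ j then P ⟨k, by omega⟩ else Q ⟨2 * j - k, by omega⟩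

theorem appendReverse_of_le {j : ℕ} (P Q : Fin (j + 1) → V) {k : ℕ} (hk : k ≤ j) :
    appendReverse P Q k = P ⟨k, by omega⟩ :=
  dif_pos hk

theorem appendReverse_of_ge {j : ℕ} {P Q : Fin (j + 1) → V}
    (hPQ : P (Fin.last j) = Q (Fin.last j)) {k : ℕ} (hjk : j ≤ k) (hk : k ≤ 2 * j) :
    appendReverse P Q k = Q ⟨2 * j - k, by omega⟩ := by
  rcases hjk.lt_or_eq with hlt | rfl
  · exact dif_neg (by omega)
  · rw [appendReverse_of_le P Q le_rfl]
    exact (congrArg P (Fin.ext rfl)).trans (hPQ.trans (congrArg Q (Fin.ext (by simp; omega))))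

theorem exists_isCycleEdges_of_pathSet [DecidableEq V] {j : ℕ} (hj : 2 ≤ j) {x y : V}
    {P Q : Fin (j + 1) → V} (hP : P ∈ G.pathSet j x y) (hQ : Q ∈ G.pathSet j x y)
    (hdisj : ∀ a ∈ Finset.Ioo 0 (Fin.last j), ∀ b ∈ Finset.Ioo 0 (Fin.last j), Q b ≠ P a) :
    ∃ s, IsCycleEdges G s (2 * j) := by
  have hPQ0 : P 0 = Q 0 := hP.2.1.trans hQ.2.1.symm
  have hPQl : P (Fin.last j) = Q (Fin.last j) := hP.2.2.1.trans hQ.2.2.1.symm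
  have hmeet : ∀ a b : Fin (j + 1), Q b = P a → a = b ∧ (a = 0 ∨ a = Fin.last j) := by
    intro a b h
    have hend : a = 0 ∨ a = Fin.last j ∨ b = 0 ∨ b = Fin.last j := by
      by_contra! hne
      obtain ⟨ha0, hal, hb0, hbl⟩ := hne
      exact hdisj
        a (Finset.mem_Ioo.2 ⟨Fin.pos_iff_ne_zero.2 ha0, Fin.lt_last_iff_ne_last.2 hal⟩)
        b (Finset.mem_Ioo.2 ⟨Fin.pos_iff_ne_zero.2 hb0, Fin.lt_last_iff_ne_last.2 hbl⟩) h
    rcases hend with rfl | rfl | rfl | rfl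
    · exact ⟨(hQ.1 (h.trans hPQ0)).symm, Or.inl rfl⟩
    · exact ⟨(hQ.1 (h.trans hPQl)).symm, Or.inr rfl⟩
    · obtain rfl := hP.1 (h.symm.trans hPQ0.symm)
      exact ⟨rfl, Or.inl rfl⟩
    · obtain rfl := hP.1 (h.symm.trans hPQl.symm)
      exact ⟨rfl, Or.inr rfl⟩
  have hmixed : ∀ k k', k ≤ j → j < k' → k' < 2 * j →
      appendReverse P Q k ≠ appendReverse P Q k' := by
    intro k k' hk hk' hk'' h
    rw [appendReverse_of_le P Q hk, appendReverse_of_ge hPQl hk'.le (by omega)] at h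
    obtain ⟨hab, hend⟩ := hmeet _ _ h.symm
    simp only [Fin.ext_iff, Fin.val_zero, Fin.val_last] at hab hend
    omega
  refine exists_isCycleEdges_of_injOn (by omega) (g := appendReverse P Q) ?_ ?_ fun k hk => ?_
  · intro k hk k' hk' h
    simp only [Set.mem_Iio] at hk hk'
    rcases le_or_gt k j with hkj | hkj <;> rcases le_or_gt k' j with hk'j | hk'j
    · rw [appendReverse_of_le P Q hkj, appendReverse_of_le P Q hk'j] at h
      exact congrArg Fin.val (hP.1 h)
    · exact absurd h (hmixed k k' hkj hk'j hk')
    · exact absurd h.symm (hmixed k' k hk'j hkj hk)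
    · rw [appendReverse_of_ge hPQl hkj.le hk.le, appendReverse_of_ge hPQl hk'j.le hk'.le] at h
      have := congrArg Fin.val (hQ.1 h)
      simp only at this
      omega
  · rw [appendReverse_of_ge hPQl (by omega) le_rfl, appendReverse_of_le P Q (Nat.zero_le j)]
    exact (congrArg Q (Fin.ext (by simp))).trans (hPQ0.symm.trans (congrArg P (Fin.ext rfl)))
  · rcases lt_or_ge k j with hkj | hkj
    · rw [appendReverse_of_le P Q hkj.le, appendReverse_of_le P Q hkj]
      exact pathSet_adj hP hkj
    · rw [appendReverse_of_ge hPQl hkj hk.le, appendReverse_of_ge hPQl (by omega) hk]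
      convert (pathSet_adj hQ (show 2 * j - (k + 1) < j by omega)).symm using 3
      omega

theorem encard_pathSet_le_pathBound [DecidableEq V] {ℓ : ℕ}
    (hG : ∀ s n, IsCycleEdges G s n → Even n → 2 * ℓ ≤ n) {j : ℕ} (hjℓ : j < ℓ) (x y : V) :
    (G.pathSet j x y).encard ≤ pathBound j := by
  induction j using Nat.strong_induction_on generalizing x y with
  | _ j ih =>
  rcases le_or_gt j 1 with hj | hj
  · exact (Set.encard_le_one_iff_subsingleton.2 (pathSet_subsingleton hj x y)).trans
      (by exact_mod_cast one_le_pathBound j)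
  obtain hempty | ⟨P, hP⟩ := (G.pathSet j x y).eq_empty_or_nonempty
  · simp [hempty]
  obtain ⟨i, rfl⟩ : ∃ i, j = i + 1 := ⟨j - 1, by omega⟩
  set I := Finset.Ioo 0 (Fin.last (i + 1))
  set piece : Fin (i + 2) × Fin (i + 2) → Set (Fin (i + 2) → V) :=
    fun p => {Q ∈ G.pathSet (i + 1) x y | Q p.2 = P p.1}
  have hcover : G.pathSet (i + 1) x y ⊆ ⋃ p ∈ I ×ˢ I, piece p := by
    intro Q hQ
    by_contra hQ'
    obtain ⟨s, hs⟩ := exists_isCycleEdges_of_pathSet (by omega) hP hQ fun a ha b hb hab =>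
      hQ' (Set.mem_biUnion (x := (a, b)) (Finset.mem_product.2 ⟨ha, hb⟩) ⟨hQ, hab⟩)
    have := hG s _ hs (even_two_mul _)
    omega
  have hpiece : ∀ p ∈ I ×ˢ I, (piece p).encard ≤ (pathBound i ^ 2 : ℕ) := by
    rintro ⟨a, b⟩ hab
    have hb := (Finset.mem_Ioo.1 (Finset.mem_product.1 hab).2)
    simp only [Fin.lt_def, Fin.val_zero, Fin.val_last] at hb
    calc (piece (a, b)).encard
        ≤ (G.pathSet b.val x (P a)).encard * (G.pathSet (i + 1 - b.val) (P a) y).encard :=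
          encard_pathSet_filter_le x y b (P a)
      _ ≤ pathBound b.val * pathBound (i + 1 - b.val) :=
          mul_le_mul' (ih _ (by omega) (by omega) _ _) (ih _ (by omega) (by omega) _ _)
      _ ≤ (pathBound i ^ 2 : ℕ) := by
          rw [sq]
          exact_mod_cast Nat.mul_le_mul (pathBound_mono (by omega)) (pathBound_mono (by omega))
  calc (G.pathSet (i + 1) x y).encard
      ≤ ∑ p ∈ I ×ˢ I, (piece p).encard :=
        (Set.encard_le_encard hcover).trans (Finset.set_encard_biUnion_le _ _)
    _ ≤ (I ×ˢ I).card • ((pathBound i ^ 2 : ℕ) : ℕ∞) := Finset.sum_le_card_nsmul _ _ _ hpiece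
    _ = (i ^ 2 * pathBound i ^ 2 : ℕ) := by
        simp [I, Fin.card_Ioo, sq]
    _ ≤ pathBound (i + 1) := by exact_mod_cast sq_mul_pathBound_sq_le i

end SimpleGraph

theorem stmt_17_general (L : Finset ℕ) (ℓ : ℕ) (hmin : ∀ l ∈ L, Even l → 2 * ℓ ≤ l) :
    ∃ c : ℕ, ∀ (V : Type) (_ : DecidableEq V) (G : SimpleGraph V),
      (∀ s len, IsCycleEdges G s len → len ∈ L) →
      ∀ (x y : V) (j : ℕ), 1 ≤ j → j ≤ ℓ - 1 →
      {f : Fin (j + 1) → V | Function.Injective f ∧ f 0 = x ∧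
        f (Fin.last j) = y ∧
        ∀ i : Fin j, G.Adj (f i.castSucc) (f i.succ)}.ncard < c := by
  refine ⟨pathBound (ℓ - 1) + 1, fun V _ G hG x y j hj hjℓ => ?_⟩
  have hbound := G.encard_pathSet_le_pathBound (fun s n hs => hmin n (hG s n hs))
    (show j < ℓ by omega) x y
  calc (G.pathSet j x y).ncard ≤ pathBound j := ENat.toNat_le_of_le_natCast hbound
    _ < pathBound (ℓ - 1) + 1 := Nat.lt_add_one_of_le (pathBound_mono hjℓ)

/-- For a finite set `L` of positive integers with smallest
even element `2ℓ`, there is a constant `c = c(L)` such that in every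
`L`-cycle graph, for any two vertices `x, y` and `1 ≤ j ≤ ℓ - 1`, there are
fewer than `c` paths of length `j` from `x` to `y`. -/
theorem stmt_17 (L : Finset ℕ) (hLpos : ∀ l ∈ L, 0 < l) (ℓ : ℕ)
    (hl : 2 * ℓ ∈ L) (hmin : ∀ l ∈ L, Even l → 2 * ℓ ≤ l) :
    ∃ c : ℕ, ∀ (V : Type) (_ : DecidableEq V) (G : SimpleGraph V),
      (∀ s len, IsCycleEdges G s len → len ∈ L) →
      ∀ (x y : V) (j : ℕ), 1 ≤ j → j ≤ ℓ - 1 →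
      {f : Fin (j + 1) → V | Function.Injective f ∧ f 0 = x ∧
        f (Fin.last j) = y ∧
        ∀ i : Fin j, G.Adj (f i.castSucc) (f i.succ)}.ncard < c :=
  stmt_17_general L ℓ hmin
end
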